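/- Let n be a positive integer, a an invertible element of Z_n, and b, c ∈ Z_n with (1-a)(1-b-c) = 0. Then the operations x*y = ax + (1-a)y, R_1(x,y) = bx + cy, and R_2(x,y) = acx + [b + c(1-a)]y make (Z_n, *, R_1, R_2) into an oriented singquandle. -/
import Mathlib


/-- For `n` positive, `a` invertible in `ZMod n` and `b c : ZMod n` with
`(1-a)(1-b-c) = 0`, the operations `x*y = ax+(1-a)y`, `R₁(x,y) = bx+cy`,
`R₂(x,y) = acx + (b + c(1-a))y` make `(ZMod n, *, R₁, R₂)` an oriented singquandle. -/
theorem affine_singquandle (n : ℕ) (hn : 0 < n) (a : (ZMod n)ˣ) (b c : ZMod n)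
    (h : (1 - (a : ZMod n)) * (1 - b - c) = 0)
    (op bop R1 R2 : ZMod n → ZMod n → ZMod n)
    (hop : ∀ x y, op x y = (a : ZMod n) * x + (1 - (a : ZMod n)) * y)
    (hbop : ∀ x y, bop x y = ((a⁻¹ : (ZMod n)ˣ) : ZMod n) * (x - (1 - (a : ZMod n)) * y))
    (hR1 : ∀ x y, R1 x y = b * x + c * y)
    (hR2 : ∀ x y, R2 x y = (a : ZMod n) * c * x + (b + c * (1 - (a : ZMod n))) * y) :
    -- quandle axioms for `op`, with `bop` its right inverse operation
    (∀ x, op x x = x) ∧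
    (∀ x y, op (bop x y) y = x ∧ bop (op x y) y = x) ∧
    (∀ x y z, op (op x y) z = op (op x z) (op y z)) ∧
    -- oriented singquandle axioms
    (∀ x y z, op (R1 (bop x y) z) y = R1 x (op z y)) ∧
    (∀ x y z, R2 (bop x y) z = bop (R2 x (op z y)) y) ∧
    (∀ x y z, op (bop y (R1 x z)) x = bop (op y (R2 x z)) z) ∧
    (∀ x y, R2 x y = R1 y (op x y)) ∧
    (∀ x y, op (R1 x y) (R2 x y) = R2 y (op x y)) := by
  have hu : ((a⁻¹ : (ZMod n)ˣ) : ZMod n) * (a : ZMod n) = 1 := by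
    rw [← Units.val_mul, inv_mul_cancel, Units.val_one]
  set A := (a : ZMod n)
  set U := ((a⁻¹ : (ZMod n)ˣ) : ZMod n)
  refine ⟨?_, ?_, ?_, ?_, ?_, ?_, ?_, ?_⟩
  · intro x; simp only [hop]; ring
  · intro x y
    refine ⟨?_, ?_⟩ <;> simp only [hop, hbop]
    · linear_combination (-y + x + A*y) * hu
    · linear_combination x * hu
  · intro x y z; simp only [hop]; ring
  · intro x y z; simp only [hop, hbop, hR1]
    linear_combination (-(b*y) + b*x + A*b*y) * hu + y * h
  · intro x y z; simp only [hop, hbop, hR2]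
    linear_combination (-(c*z) - b*z + A*c*z) * hu + (U*y) * h
  · intro x y z; simp only [hop, hbop, hR1, hR2]
    linear_combination (-(c*x) - b*x + A*c*x + A*b*x) * hu + (x + U*z) * h
  · intro x y; simp only [hop, hR1, hR2]; ring
  · intro x y; simp only [hop, hR1, hR2]; ring
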